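/- arXiv:2604.00569 — 2 statements merged into one kernel-verified Lean document; each statement's English description precedes it below -/
import Mathlib

section
/- Let f : ℝⁿ → ℝ be convex, differentiable, and L-smooth with L > 0, and let x⋆ be a global minimizer of f. Let {x^k}, {y^k}, {t_k}, {f̂^k} be generated by the accelerated proximal bundle method (APBM) with models f̂^k satisfying Assumption 1. Write v^k = f(x^k) − f(x⋆) and u^k = x⋆ + (t_k − 1)x^{k−1} − t_k x^k. Then for every k ≥ 1, t_{k+1}² v^{k+1} − t_k² v^k ≤ (L/2)‖u^k‖² − (L/2)‖u^{k+1}‖². -/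
/-!
Each prox step satisfies `f x⁺ ≤ f z + L/2 (‖z - y‖² - ‖z - x⁺‖²)` for every `z`: the descent
lemma and the lower model bound give `f x⁺ ≤ f̂ x⁺ + L/2 ‖x⁺ - y‖²`, and first-order optimality of
the prox step compares `f̂ x⁺` with `f̂ z ≤ f z`. Apply this at step `k + 1` with `z = x^k` and
`z = x⋆`, weighted by `t_{k+1} (t_{k+1} - 1) = t_k²` and `t_{k+1}`. The momentum rule makes
`x⋆ + (t_{k+1} - 1) x^k - t_{k+1} y^{k+1} = u^k`, so the weighted distances collapse to
`L/2 (‖u^k‖² - ‖u^{k+1}‖²)`.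
-/

open scoped RealInnerProductSpace
open Set Filter Topology

variable {E : Type*} [NormedAddCommGroup E] [InnerProductSpace ℝ E]

theorem ConvexOn.le_add_inner_of_forall_le_add_sq {g : E → ℝ} {L : ℝ} (hg : ConvexOn ℝ univ g)
    {x y : E} (hx : ∀ z, g x + L / 2 * ‖x - y‖ ^ 2 ≤ g z + L / 2 * ‖z - y‖ ^ 2) (z : E) :
    g x ≤ g z + L * ⟪x - y, z - x⟫ := by
  have hθ : ∀ θ ∈ Ioo (0 : ℝ) 1,
      g x ≤ g z + L * ⟪x - y, z - x⟫ + θ * (L / 2 * ‖z - x‖ ^ 2) := by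
    rintro θ ⟨hθ0, hθ1⟩
    have hconv : g (x + θ • (z - x)) ≤ (1 - θ) * g x + θ * g z := by
      have := hg.2 (mem_univ x) (mem_univ z) (show 0 ≤ 1 - θ by linarith) hθ0.le (by ring)
      rwa [show (1 - θ) • x + θ • z = x + θ • (z - x) by module, smul_eq_mul, smul_eq_mul] at this
    have hnorm : ‖x + θ • (z - x) - y‖ ^ 2
        = ‖x - y‖ ^ 2 + 2 * θ * ⟪x - y, z - x⟫ + θ ^ 2 * ‖z - x‖ ^ 2 := by
      rw [show x + θ • (z - x) - y = (x - y) + θ • (z - x) by abel, norm_add_sq_real,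
        real_inner_smul_right, norm_smul, Real.norm_eq_abs, mul_pow, sq_abs]
      ring
    have hmin := hx (x + θ • (z - x))
    rw [hnorm] at hmin
    refine le_of_mul_le_mul_left ?_ hθ0
    nlinarith
  have hlim : Tendsto (fun θ : ℝ => g z + L * ⟪x - y, z - x⟫ + θ * (L / 2 * ‖z - x‖ ^ 2))
      (𝓝[>] 0) (𝓝 (g z + L * ⟪x - y, z - x⟫)) := by
    refine tendsto_nhdsWithin_of_tendsto_nhds ?_
    simpa using ((tendsto_id (x := 𝓝 (0 : ℝ))).mul_const (L / 2 * ‖z - x‖ ^ 2)).const_add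
      (g z + L * ⟪x - y, z - x⟫)
  exact ge_of_tendsto hlim (eventually_of_mem (Ioo_mem_nhdsGT one_pos) hθ)

section Complete

variable [CompleteSpace E] {f : E → ℝ}

theorem hasDerivAt_comp_add_smul (hf : Differentiable ℝ f) (a d : E) (s : ℝ) :
    HasDerivAt (fun s : ℝ => f (a + s • d)) ⟪gradient f (a + s • d), d⟫ s := by
  have hline : HasDerivAt (fun s : ℝ => a + s • d) d s := by
    simpa using ((hasDerivAt_id s).smul_const d).const_add a
  have := (hf (a + s • d)).hasGradientAt.hasFDerivAt.comp_hasDerivAt s hline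
  rw [InnerProductSpace.toDual_apply_apply] at this
  exact this

theorem le_add_inner_gradient_add_sq {L : ℝ} (hf : Differentiable ℝ f)
    (hsmooth : ∀ u v, ‖gradient f u - gradient f v‖ ≤ L * ‖u - v‖) (a b : E) :
    f b ≤ f a + ⟪gradient f a, b - a⟫ + L / 2 * ‖b - a‖ ^ 2 := by
  set d := b - a
  set g : ℝ → ℝ := fun s => f (a + s • d) - s * ⟪gradient f a, d⟫ - L / 2 * s ^ 2 * ‖d‖ ^ 2
  have hg : ∀ s, HasDerivAt g
      (⟪gradient f (a + s • d) - gradient f a, d⟫ - L * s * ‖d‖ ^ 2) s := by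
    intro s
    have := ((hasDerivAt_comp_add_smul hf a d s).sub
      ((hasDerivAt_id s).mul_const ⟪gradient f a, d⟫)).sub
      (((hasDerivAt_pow 2 s).const_mul (L / 2)).mul_const (‖d‖ ^ 2))
    exact this.congr_deriv (by simp only [inner_sub_left]; ring)
  have hanti : AntitoneOn g (Icc 0 1) := by
    refine antitoneOn_of_deriv_nonpos (convex_Icc 0 1)
      (fun s _ => (hg s).continuousAt.continuousWithinAt)
      (fun s _ => (hg s).differentiableAt.differentiableWithinAt) fun s hs => ?_
    rw [interior_Icc] at hs
    rw [(hg s).deriv, sub_nonpos]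
    calc ⟪gradient f (a + s • d) - gradient f a, d⟫
        ≤ ‖gradient f (a + s • d) - gradient f a‖ * ‖d‖ := real_inner_le_norm _ _
      _ ≤ L * ‖a + s • d - a‖ * ‖d‖ := by gcongr; exact hsmooth _ _
      _ = L * s * ‖d‖ ^ 2 := by
        rw [add_sub_cancel_left, norm_smul, Real.norm_of_nonneg hs.1.le]
        ring
  have := hanti (left_mem_Icc.2 zero_le_one) (right_mem_Icc.2 zero_le_one) zero_le_one
  simp only [g, d, one_smul, zero_smul, add_zero, add_sub_cancel] at this
  linarith

theorem bundle_prox_step_le {L : ℝ} {fh : E → ℝ} (hf : Differentiable ℝ f)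
    (hsmooth : ∀ u v, ‖gradient f u - gradient f v‖ ≤ L * ‖u - v‖) (hfh : ConvexOn ℝ univ fh)
    {x y : E} (hlower : ∀ z, f y + ⟪gradient f y, z - y⟫ ≤ fh z)
    (hx : ∀ z, fh x + L / 2 * ‖x - y‖ ^ 2 ≤ fh z + L / 2 * ‖z - y‖ ^ 2)
    (z : E) (hupper : fh z ≤ f z) :
    f x ≤ f z + L / 2 * ‖z - y‖ ^ 2 - L / 2 * ‖z - x‖ ^ 2 := by
  have hdescent := le_add_inner_gradient_add_sq hf hsmooth y x
  have hprox := hfh.le_add_inner_of_forall_le_add_sq hx z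
  have hsplit : ‖z - y‖ ^ 2 = ‖x - y‖ ^ 2 + 2 * ⟪x - y, z - x⟫ + ‖z - x‖ ^ 2 := by
    rw [show z - y = (x - y) + (z - x) by abel, norm_add_sq_real]
  linear_combination hdescent + hlower x + hprox + hupper - L / 2 * hsplit

end Complete

theorem mul_norm_sub_sq_add_mul_norm_sub_sq (a : ℝ) (s p w : E) :
    a * ‖s - w‖ ^ 2 + a * (a - 1) * ‖p - w‖ ^ 2
      = ‖s + (a - 1) • p - a • w‖ ^ 2 + (a - 1) * ‖s - p‖ ^ 2 := by
  simp only [← real_inner_self_eq_norm_sq, inner_sub_left, inner_sub_right,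
    inner_add_left, inner_add_right, real_inner_smul_left, real_inner_smul_right,
    real_inner_comm p s, real_inner_comm w s, real_inner_comm w p]
  ring

theorem smul_sub_smul_extrapolate {a τ : ℝ} (ha : a ≠ 0) (s x x' : E) :
    s + (a - 1) • x - a • (x + ((τ - 1) / a) • (x - x')) = s + (τ - 1) • x' - τ • x := by
  rw [smul_add, smul_smul, mul_div_cancel₀ _ ha]
  module

theorem one_le_of_eq_one_add_sqrt {a s : ℝ} (ha : a = (1 + √(1 + 4 * s ^ 2)) / 2) : 1 ≤ a := by
  have : 1 ≤ √(1 + 4 * s ^ 2) := Real.one_le_sqrt.2 (by nlinarith)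
  linarith

theorem sq_sub_self_of_eq_one_add_sqrt {a s : ℝ} (ha : a = (1 + √(1 + 4 * s ^ 2)) / 2) :
    a ^ 2 - a = s ^ 2 := by
  have h : (2 * a - 1) ^ 2 = 1 + 4 * s ^ 2 := by
    rw [ha, show 2 * ((1 + √(1 + 4 * s ^ 2)) / 2) - 1 = √(1 + 4 * s ^ 2) by ring,
      Real.sq_sqrt (by positivity)]
  linarith

theorem apbm_telescoping_general {n : ℕ} {L : ℝ}
    (f : EuclideanSpace ℝ (Fin n) → ℝ)
    (hdiff : Differentiable ℝ f)
    (hsmooth : ∀ u v, ‖gradient f u - gradient f v‖ ≤ L * ‖u - v‖)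
    (xstar : EuclideanSpace ℝ (Fin n))
    (x y : ℕ → EuclideanSpace ℝ (Fin n)) (t : ℕ → ℝ)
    (fhat : ℕ → EuclideanSpace ℝ (Fin n) → ℝ)
    (htrec : ∀ k ≥ 1, t (k + 1) = (1 + Real.sqrt (1 + 4 * t k ^ 2)) / 2)
    (hxmin : ∀ k ≥ 1, ∀ z,
      fhat k (x k) + L / 2 * ‖x k - y k‖ ^ 2 ≤ fhat k z + L / 2 * ‖z - y k‖ ^ 2)
    (hyrec : ∀ k ≥ 1, y (k + 1) = x k + ((t k - 1) / t (k + 1)) • (x k - x (k - 1)))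
    (hmodel_convex : ∀ k ≥ 1, ConvexOn ℝ Set.univ (fhat k))
    (hmodel_lower : ∀ k ≥ 1, ∀ z,
      f (y k) + ⟪gradient f (y k), z - y k⟫ ≤ fhat k z)
    (hmodel_upper : ∀ k ≥ 1, ∀ z, fhat k z ≤ f z) :
    ∀ k ≥ 1,
      t (k + 1) ^ 2 * (f (x (k + 1)) - f xstar) - t k ^ 2 * (f (x k) - f xstar) ≤
        L / 2 * ‖xstar + (t k - 1) • x (k - 1) - t k • x k‖ ^ 2 -
          L / 2 * ‖xstar + (t (k + 1) - 1) • x k - t (k + 1) • x (k + 1)‖ ^ 2 := by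
  intro k hk
  set a := t (k + 1)
  have ha : 1 ≤ a := one_le_of_eq_one_add_sqrt (htrec k hk)
  have hstep := bundle_prox_step_le hdiff hsmooth (hmodel_convex (k + 1) (by omega))
    (hmodel_lower _ (by omega)) (hxmin _ (by omega))
  have hprev := hstep (x k) (hmodel_upper _ (by omega) _)
  have hstar := hstep xstar (hmodel_upper _ (by omega) _)
  have hu : xstar + (a - 1) • x k - a • y (k + 1) = xstar + (t k - 1) • x (k - 1) - t k • x k := by
    rw [hyrec k hk]
    exact smul_sub_smul_extrapolate (zero_lt_one.trans_le ha).ne' _ _ _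
  have hid_y := mul_norm_sub_sq_add_mul_norm_sub_sq a xstar (x k) (y (k + 1))
  have hid_x := mul_norm_sub_sq_add_mul_norm_sub_sq a xstar (x k) (x (k + 1))
  rw [hu] at hid_y
  rw [← sq_sub_self_of_eq_one_add_sqrt (htrec k hk)]
  linear_combination a * (a - 1) * hprev + a * hstar + L / 2 * (hid_y - hid_x)

/-- Key telescoping inequality in the proof of Theorem 1:
`t_{k+1}² v^{k+1} − t_k² v^k ≤ (L/2)‖u^k‖² − (L/2)‖u^{k+1}‖²`
where `v^k = f(x^k) − f(x⋆)` and `u^k = x⋆ + (t_k − 1)x^{k−1} − t_k x^k`. -/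
theorem apbm_telescoping {n : ℕ} {L : ℝ} (hL : 0 < L)
    (f : EuclideanSpace ℝ (Fin n) → ℝ)
    (hconv : ConvexOn ℝ Set.univ f)
    (hdiff : Differentiable ℝ f)
    (hsmooth : ∀ u v, ‖gradient f u - gradient f v‖ ≤ L * ‖u - v‖)
    (xstar : EuclideanSpace ℝ (Fin n)) (hmin : ∀ z, f xstar ≤ f z)
    (x y : ℕ → EuclideanSpace ℝ (Fin n)) (t : ℕ → ℝ)
    (fhat : ℕ → EuclideanSpace ℝ (Fin n) → ℝ)
    (ht1 : t 1 = 1)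
    (htrec : ∀ k ≥ 1, t (k + 1) = (1 + Real.sqrt (1 + 4 * t k ^ 2)) / 2)
    (hy1 : y 1 = x 0)
    (hxmin : ∀ k ≥ 1, ∀ z,
      fhat k (x k) + L / 2 * ‖x k - y k‖ ^ 2 ≤ fhat k z + L / 2 * ‖z - y k‖ ^ 2)
    (hyrec : ∀ k ≥ 1, y (k + 1) = x k + ((t k - 1) / t (k + 1)) • (x k - x (k - 1)))
    (hmodel_convex : ∀ k ≥ 1, ConvexOn ℝ Set.univ (fhat k))
    (hmodel_lower : ∀ k ≥ 1, ∀ z,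
      f (y k) + ⟪gradient f (y k), z - y k⟫ ≤ fhat k z)
    (hmodel_upper : ∀ k ≥ 1, ∀ z, fhat k z ≤ f z) :
    ∀ k ≥ 1,
      t (k + 1) ^ 2 * (f (x (k + 1)) - f xstar) - t k ^ 2 * (f (x k) - f xstar) ≤
        L / 2 * ‖xstar + (t k - 1) • x (k - 1) - t k • x k‖ ^ 2 -
          L / 2 * ‖xstar + (t (k + 1) - 1) • x k - t (k + 1) • x (k + 1)‖ ^ 2 :=
  apbm_telescoping_general f hdiff hsmooth xstar x y t fhat htrec hxmin hyrec hmodel_convex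
    hmodel_lower hmodel_upper
end

section
/- Let f : ℝⁿ → ℝ be convex, differentiable, and L-smooth with L > 0, and let x⋆ be a global minimizer of f. Let {x^k}, {y^k}, {t_k}, {f̂^k} be generated by the accelerated proximal bundle method (APBM) with models f̂^k satisfying Assumption 1. Then for every k ≥ 1, t_k² (f(x^k) − f(x⋆)) ≤ (f(x¹) − f(x⋆)) + (L/2)‖x⋆ − x¹‖². -/
open scoped RealInnerProductSpace
open Set Filter Topology

/-! Each APBM step satisfies the inexact proximal-gradient inequality
`f(x^k) + L/2‖z − x^k‖² ≤ f(z) + L/2‖z − y^k‖²` for every `z`: the descent lemma and the lower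
model bound give `f(x^k) ≤ f̂^k(x^k) + L/2‖x^k − y^k‖²`, the prox objective is `L`-strongly convex
so its minimizer `x^k` has quadratic growth, and the upper model bound returns to `f`. Adding this
inequality at step `k + 1` for `z = x^k` and `z = x⋆`, weighted by `t_{k+1}(t_{k+1} − 1) = t_k²` and
`t_{k+1}`, shows that the energy `t_k²(f(x^k) − f(x⋆)) + L/2‖t_k x^k − (t_k − 1)x^{k−1} − x⋆‖²` is
nonincreasing; since `t_1 = 1`, its value at `k = 1` is the right-hand side. -/

variable {F : Type*} [NormedAddCommGroup F] [InnerProductSpace ℝ F]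

theorem ConvexOn.strongConvexOn_add_sq_norm_sub {s : Set F} {φ : F → ℝ} (hφ : ConvexOn ℝ s φ)
    (L : ℝ) (y : F) : StrongConvexOn s L fun x ↦ φ x + L / 2 * ‖x - y‖ ^ 2 := by
  rw [strongConvexOn_iff_convex]
  have haffine : (fun x ↦ φ x + L / 2 * ‖x - y‖ ^ 2 - L / 2 * ‖x‖ ^ 2) =
      fun x ↦ φ x + (-(L • innerₛₗ ℝ y)) x + L / 2 * ‖y‖ ^ 2 := by
    ext x
    simp only [norm_sub_sq_real, LinearMap.neg_apply, LinearMap.smul_apply, innerₛₗ_apply_apply,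
      real_inner_comm x y, smul_eq_mul]
    ring
  rw [haffine]
  exact (hφ.add ((-(L • innerₛₗ ℝ y)).convexOn hφ.1)).add_const _

theorem StrongConvexOn.add_sq_norm_sub_le_of_isMinOn {s : Set F} {m : ℝ} {g : F → ℝ} {x z : F}
    (hg : StrongConvexOn s m g) (hx : IsMinOn g s x) (hxs : x ∈ s) (hzs : z ∈ s) :
    g x + m / 2 * ‖z - x‖ ^ 2 ≤ g z := by
  have hshrink : ∀ l ∈ Ioo (0 : ℝ) 1, g x + (1 - l) * (m / 2 * ‖z - x‖ ^ 2) ≤ g z := by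
    rintro l ⟨hl0, hl1⟩
    have hconv := hg.2 hxs hzs (sub_nonneg.2 hl1.le) hl0.le (sub_add_cancel 1 l)
    have hmin := isMinOn_iff.1 hx _ (hg.1 hxs hzs (sub_nonneg.2 hl1.le) hl0.le (sub_add_cancel 1 l))
    rw [norm_sub_rev] at hconv
    have : l * (g x + (1 - l) * (m / 2 * ‖z - x‖ ^ 2)) ≤ l * g z := by
      simp only [smul_eq_mul] at hconv
      linarith
    exact le_of_mul_le_mul_left this hl0
  have hlim : Tendsto (fun l : ℝ ↦ g x + (1 - l) * (m / 2 * ‖z - x‖ ^ 2)) (𝓝[>] 0)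
      (𝓝 (g x + (1 - 0) * (m / 2 * ‖z - x‖ ^ 2))) :=
    ((Continuous.tendsto (by fun_prop) 0).mono_left nhdsWithin_le_nhds)
  simpa using le_of_tendsto hlim (eventually_of_mem (Ioo_mem_nhdsGT one_pos) hshrink)

theorem le_add_inner_gradient_add_sq_of_lipschitz [CompleteSpace F] {f : F → ℝ} {L : ℝ}
    (hf : Differentiable ℝ f) (hgrad : ∀ u v, ‖gradient f u - gradient f v‖ ≤ L * ‖u - v‖)
    (x y : F) : f x ≤ f y + ⟪gradient f y, x - y⟫ + L / 2 * ‖x - y‖ ^ 2 := by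
  set c : ℝ → F := fun s ↦ y + s • (x - y)
  have hc : ∀ s, HasDerivAt c (x - y) s := fun s ↦
    (((hasDerivAt_id s).smul_const (x - y)).const_add y).congr_deriv (one_smul ℝ _)
  have hfc : ∀ s, HasDerivAt (f ∘ c) ⟪gradient f (c s), x - y⟫ s := fun s ↦
    (hf (c s)).hasGradientAt.hasFDerivAt.comp_hasDerivAt s (hc s)
  have hB : ∀ s, HasDerivAt (fun s ↦ f y + s * ⟪gradient f y, x - y⟫ + L / 2 * ‖x - y‖ ^ 2 * s ^ 2)
      (⟪gradient f y, x - y⟫ + L * ‖x - y‖ ^ 2 * s) s := fun s ↦ by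
    refine ((((hasDerivAt_id s).mul_const _).const_add (f y)).add
      ((hasDerivAt_pow 2 s).const_mul (L / 2 * ‖x - y‖ ^ 2))).congr_deriv ?_
    simp only [one_mul, Nat.cast_ofNat]
    ring
  have hslope : ∀ s, 0 ≤ s →
      ⟪gradient f (c s), x - y⟫ ≤ ⟪gradient f y, x - y⟫ + L * ‖x - y‖ ^ 2 * s := by
    intro s hs
    have hcs : c s - y = s • (x - y) := by simp [c]
    calc ⟪gradient f (c s), x - y⟫
        = ⟪gradient f y, x - y⟫ + ⟪gradient f (c s) - gradient f y, x - y⟫ := by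
          rw [inner_sub_left]; ring
      _ ≤ ⟪gradient f y, x - y⟫ + L * ‖c s - y‖ * ‖x - y‖ := by
          gcongr
          exact (real_inner_le_norm _ _).trans
            (mul_le_mul_of_nonneg_right (hgrad _ _) (norm_nonneg _))
      _ = ⟪gradient f y, x - y⟫ + L * ‖x - y‖ ^ 2 * s := by
          rw [hcs, norm_smul, Real.norm_of_nonneg hs]; ring
  have := image_le_of_deriv_right_le_deriv_boundary (a := 0) (b := 1)
    (fun s _ ↦ (hfc s).continuousAt.continuousWithinAt) (fun s _ ↦ (hfc s).hasDerivWithinAt)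
    (by simp [c]) (fun s _ ↦ (hB s).continuousAt.continuousWithinAt)
    (fun s _ ↦ (hB s).hasDerivWithinAt) (fun s hs ↦ hslope s hs.1) (right_mem_Icc.2 zero_le_one)
  simpa [c] using this

theorem model_prox_step_le [CompleteSpace F] {f φ : F → ℝ} {L : ℝ} {x y : F}
    (hf : Differentiable ℝ f) (hgrad : ∀ u v, ‖gradient f u - gradient f v‖ ≤ L * ‖u - v‖)
    (hφ : ConvexOn ℝ univ φ) (hlower : ∀ z, f y + ⟪gradient f y, z - y⟫ ≤ φ z)
    (hupper : ∀ z, φ z ≤ f z)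
    (hx : ∀ z, φ x + L / 2 * ‖x - y‖ ^ 2 ≤ φ z + L / 2 * ‖z - y‖ ^ 2) (z : F) :
    f x + L / 2 * ‖z - x‖ ^ 2 ≤ f z + L / 2 * ‖z - y‖ ^ 2 :=
  calc f x + L / 2 * ‖z - x‖ ^ 2 ≤ φ x + L / 2 * ‖x - y‖ ^ 2 + L / 2 * ‖z - x‖ ^ 2 := by
        linarith [le_add_inner_gradient_add_sq_of_lipschitz hf hgrad x y, hlower x]
    _ ≤ φ z + L / 2 * ‖z - y‖ ^ 2 :=
        (hφ.strongConvexOn_add_sq_norm_sub L y).add_sq_norm_sub_le_of_isMinOn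
          (isMinOn_univ_iff.2 hx) (mem_univ x) (mem_univ z)
    _ ≤ f z + L / 2 * ‖z - y‖ ^ 2 := by linarith [hupper z]

theorem one_le_fista_momentum (a : ℝ) : 1 ≤ (1 + √(1 + 4 * a ^ 2)) / 2 := by
  have : 1 ≤ √(1 + 4 * a ^ 2) := Real.one_le_sqrt.2 (by nlinarith)
  linarith

theorem fista_momentum_sq_sub_self (a : ℝ) :
    ((1 + √(1 + 4 * a ^ 2)) / 2) ^ 2 - (1 + √(1 + 4 * a ^ 2)) / 2 = a ^ 2 := by
  have := Real.sq_sqrt (by positivity : (0 : ℝ) ≤ 1 + 4 * a ^ 2)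
  linear_combination this / 4

theorem fista_energy_succ_le {L s T f₁ f₂ fz : ℝ} {x₀ x₁ x₂ y z : F} (hT : 1 ≤ T)
    (hTs : T ^ 2 - T = s ^ 2) (hy : y = x₁ + ((s - 1) / T) • (x₁ - x₀))
    (h₁ : f₂ + L / 2 * ‖x₁ - x₂‖ ^ 2 ≤ f₁ + L / 2 * ‖x₁ - y‖ ^ 2)
    (hz : f₂ + L / 2 * ‖z - x₂‖ ^ 2 ≤ fz + L / 2 * ‖z - y‖ ^ 2) :
    T ^ 2 * (f₂ - fz) + L / 2 * ‖T • x₂ - (T - 1) • x₁ - z‖ ^ 2 ≤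
      s ^ 2 * (f₁ - fz) + L / 2 * ‖s • x₁ - (s - 1) • x₀ - z‖ ^ 2 := by
  have hTy : T • y - (T - 1) • x₁ - z = s • x₁ - (s - 1) • x₀ - z := by
    rw [hy, smul_add, smul_smul, mul_div_cancel₀ _ (by positivity)]
    module
  have hid : T * (T - 1) * (‖x₁ - y‖ ^ 2 - ‖x₁ - x₂‖ ^ 2) + T * (‖z - y‖ ^ 2 - ‖z - x₂‖ ^ 2) =
      ‖T • y - (T - 1) • x₁ - z‖ ^ 2 - ‖T • x₂ - (T - 1) • x₁ - z‖ ^ 2 := by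
    simp only [← real_inner_self_eq_norm_sq, inner_sub_left, inner_sub_right,
      real_inner_smul_left, real_inner_smul_right]
    ring
  rw [hTy] at hid
  have h₁' := mul_le_mul_of_nonneg_left h₁ (by nlinarith : 0 ≤ T * (T - 1))
  have hz' := mul_le_mul_of_nonneg_left hz (by linarith : 0 ≤ T)
  rw [← hTs]
  linear_combination h₁' + hz' + L / 2 * hid

theorem apbm_tk_bound_general {n : ℕ} {L : ℝ} (hL : 0 < L)
    (f : EuclideanSpace ℝ (Fin n) → ℝ)
    (hdiff : Differentiable ℝ f)
    (hsmooth : ∀ u v, ‖gradient f u - gradient f v‖ ≤ L * ‖u - v‖)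
    (xstar : EuclideanSpace ℝ (Fin n))
    (x y : ℕ → EuclideanSpace ℝ (Fin n)) (t : ℕ → ℝ)
    (fhat : ℕ → EuclideanSpace ℝ (Fin n) → ℝ)
    (ht1 : t 1 = 1)
    (htrec : ∀ k ≥ 1, t (k + 1) = (1 + Real.sqrt (1 + 4 * t k ^ 2)) / 2)
    (hxmin : ∀ k ≥ 1, ∀ z,
      fhat k (x k) + L / 2 * ‖x k - y k‖ ^ 2 ≤ fhat k z + L / 2 * ‖z - y k‖ ^ 2)
    (hyrec : ∀ k ≥ 1, y (k + 1) = x k + ((t k - 1) / t (k + 1)) • (x k - x (k - 1)))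
    (hmodel_convex : ∀ k ≥ 1, ConvexOn ℝ Set.univ (fhat k))
    (hmodel_lower : ∀ k ≥ 1, ∀ z,
      f (y k) + ⟪gradient f (y k), z - y k⟫ ≤ fhat k z)
    (hmodel_upper : ∀ k ≥ 1, ∀ z, fhat k z ≤ f z) :
    ∀ k ≥ 1,
      t k ^ 2 * (f (x k) - f xstar) ≤
        (f (x 1) - f xstar) + L / 2 * ‖xstar - x 1‖ ^ 2 := by
  have hstep : ∀ k ≥ 1, ∀ z, f (x k) + L / 2 * ‖z - x k‖ ^ 2 ≤ f z + L / 2 * ‖z - y k‖ ^ 2 :=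
    fun k hk ↦ model_prox_step_le hdiff hsmooth (hmodel_convex k hk) (hmodel_lower k hk)
      (hmodel_upper k hk) (hxmin k hk)
  set E : ℕ → ℝ := fun k ↦ t k ^ 2 * (f (x k) - f xstar) +
    L / 2 * ‖t k • x k - (t k - 1) • x (k - 1) - xstar‖ ^ 2
  have hE_succ : ∀ k ≥ 1, E (k + 1) ≤ E k := fun k hk ↦
    fista_energy_succ_le (htrec k hk ▸ one_le_fista_momentum (t k))
      (htrec k hk ▸ fista_momentum_sq_sub_self (t k)) (hyrec k hk)
      (hstep (k + 1) (by omega) (x k)) (hstep (k + 1) (by omega) xstar)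
  intro k hk
  calc t k ^ 2 * (f (x k) - f xstar) ≤ E k := le_add_of_nonneg_right (by positivity)
    _ ≤ E 1 := Nat.le_induction le_rfl (fun m hm ih ↦ (hE_succ m hm).trans ih) k hk
    _ = _ := by simp [E, ht1, norm_sub_rev]

/-- Penultimate inequality in the proof of Theorem 1:
`t_k² (f(x^k) − f(x⋆)) ≤ (f(x¹) − f(x⋆)) + (L/2)‖x⋆ − x¹‖²` for all `k ≥ 1`. -/
theorem apbm_tk_bound {n : ℕ} {L : ℝ} (hL : 0 < L)
    (f : EuclideanSpace ℝ (Fin n) → ℝ)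
    (hconv : ConvexOn ℝ Set.univ f)
    (hdiff : Differentiable ℝ f)
    (hsmooth : ∀ u v, ‖gradient f u - gradient f v‖ ≤ L * ‖u - v‖)
    (xstar : EuclideanSpace ℝ (Fin n)) (hmin : ∀ z, f xstar ≤ f z)
    (x y : ℕ → EuclideanSpace ℝ (Fin n)) (t : ℕ → ℝ)
    (fhat : ℕ → EuclideanSpace ℝ (Fin n) → ℝ)
    (ht1 : t 1 = 1)
    (htrec : ∀ k ≥ 1, t (k + 1) = (1 + Real.sqrt (1 + 4 * t k ^ 2)) / 2)
    (hy1 : y 1 = x 0)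
    (hxmin : ∀ k ≥ 1, ∀ z,
      fhat k (x k) + L / 2 * ‖x k - y k‖ ^ 2 ≤ fhat k z + L / 2 * ‖z - y k‖ ^ 2)
    (hyrec : ∀ k ≥ 1, y (k + 1) = x k + ((t k - 1) / t (k + 1)) • (x k - x (k - 1)))
    (hmodel_convex : ∀ k ≥ 1, ConvexOn ℝ Set.univ (fhat k))
    (hmodel_lower : ∀ k ≥ 1, ∀ z,
      f (y k) + ⟪gradient f (y k), z - y k⟫ ≤ fhat k z)
    (hmodel_upper : ∀ k ≥ 1, ∀ z, fhat k z ≤ f z) :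
    ∀ k ≥ 1,
      t k ^ 2 * (f (x k) - f xstar) ≤
        (f (x 1) - f xstar) + L / 2 * ‖xstar - x 1‖ ^ 2 :=
  apbm_tk_bound_general hL f hdiff hsmooth xstar x y t fhat ht1 htrec hxmin hyrec hmodel_convex
    hmodel_lower hmodel_upper
end
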